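/- arXiv:2403.00323 — 2 statements merged into one kernel-verified Lean document; each statement's English description precedes it below -/
import Mathlib

section
/- Let E be a real normed vector space, S a nonempty finite set, θ₀ ∈ E, and P : S → E → ℝ such that for each z ∈ S the map θ ↦ P z θ is differentiable at θ₀ and P z θ₀ > 0. Then the Fréchet derivative of the semantic loss θ ↦ −log (∑_{z∈S} P z θ) at θ₀ equals the Boltzmann-weighted combination of the derivatives of the log-likelihoods: fderiv of (θ ↦ −log ∑_{z∈S} P z θ) at θ₀ = −∑_{z∈S} (P z θ₀ / ∑_{z'∈S} P z' θ₀) • (fderiv of (θ ↦ log (P z θ)) at θ₀). -/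
open Finset

/-- Gradient identity for the semantic loss: the Fréchet derivative of
`θ ↦ -log ∑ P z θ` at `θ₀` is the Boltzmann-weighted (temperature `γ = 1`)
combination of the derivatives of the log-likelihoods `θ ↦ log (P z θ)`. -/
theorem fderiv_semanticLoss_eq_boltzmann_combination
    {E : Type*} [NormedAddCommGroup E] [NormedSpace ℝ E]
    {ι : Type*} [Fintype ι] [Nonempty ι]
    (θ₀ : E) (P : ι → E → ℝ)
    (hdiff : ∀ z, DifferentiableAt ℝ (fun θ => P z θ) θ₀)
    (hpos : ∀ z, 0 < P z θ₀) :
    fderiv ℝ (fun θ => -Real.log (∑ z, P z θ)) θ₀ =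
      -∑ z, (P z θ₀ / ∑ z', P z' θ₀) •
        fderiv ℝ (fun θ => Real.log (P z θ)) θ₀ := by
  have hSpos : 0 < ∑ z, P z θ₀ := Finset.sum_pos (fun z _ => hpos z) Finset.univ_nonempty
  have hsum : HasFDerivAt (fun θ => ∑ z, P z θ)
      (∑ z, fderiv ℝ (fun θ => P z θ) θ₀) θ₀ := by
    have := HasFDerivAt.fun_sum (fun z (_ : z ∈ Finset.univ) => (hdiff z).hasFDerivAt)
    simpa using this
  have hlogsum : HasFDerivAt (fun θ => -Real.log (∑ z, P z θ))
      (-((∑ z, P z θ₀)⁻¹ • ∑ z, fderiv ℝ (fun θ => P z θ) θ₀)) θ₀ :=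
    (hsum.log hSpos.ne').neg
  have hlogz : ∀ z, fderiv ℝ (fun θ => Real.log (P z θ)) θ₀ =
      (P z θ₀)⁻¹ • fderiv ℝ (fun θ => P z θ) θ₀ := fun z =>
    (((hdiff z).hasFDerivAt).log (hpos z).ne').fderiv
  rw [hlogsum.fderiv]
  congr 1
  rw [Finset.smul_sum]
  refine Finset.sum_congr rfl fun z _ => ?_
  rw [hlogz z, smul_smul, div_eq_mul_inv, mul_comm, ← mul_assoc,
    inv_mul_cancel₀ (hpos z).ne', one_mul]
end

section
/- Let E be a real inner product space (Hilbert space), f : E → ℝ differentiable with gradient that is L₁-Lipschitz (L₁ > 0): ‖∇f(x) − ∇f(y)‖ ≤ L₁·‖x − y‖ for all x, y, and suppose f is bounded below by f*. Let 0 < η ≤ 1/(4·L₁), let B ≥ 0, and let (θ_k) and (g_k) be sequences with θ_{k+1} = θ_k − η • g_k and ‖g_k − ∇f(θ_k)‖ ≤ B for all k. Then for every K ≥ 1, the average squared gradient norm satisfies (1/K) · ∑_{k=0}^{K−1} ‖∇f(θ_k)‖² ≤ 4·(f(θ₀) − f*)/(η·K) + 3·B². -/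
open Finset

open RealInnerProductSpace in
/-- Descent lemma: Lipschitz gradient gives a quadratic upper bound. -/
lemma descent_aux {E : Type*} [NormedAddCommGroup E] [InnerProductSpace ℝ E] [CompleteSpace E]
    (f : E → ℝ) (hf : Differentiable ℝ f) (L₁ : ℝ) (hL₁ : 0 < L₁)
    (hlip : ∀ x y : E, ‖gradient f x - gradient f y‖ ≤ L₁ * ‖x - y‖)
    (x v : E) :
    f (x + v) ≤ f x + ⟪gradient f x, v⟫ + L₁ / 2 * ‖v‖ ^ 2 := by
  set ψ : ℝ → ℝ := fun t => f (x + t • v) - t * ⟪gradient f x, v⟫ - L₁ / 2 * t ^ 2 * ‖v‖ ^ 2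
    with hψdef
  have hψ : ∀ t : ℝ, HasDerivAt ψ
      (⟪gradient f (x + t • v), v⟫ - ⟪gradient f x, v⟫ - L₁ * t * ‖v‖ ^ 2) t := by
    intro t
    have hc : HasDerivAt (fun t : ℝ => x + t • v) v t := by
      simpa using ((hasDerivAt_id t).smul_const v).const_add x
    have h1 : HasDerivAt (fun t : ℝ => f (x + t • v)) (⟪gradient f (x + t • v), v⟫) t := by
      have := ((hf _).hasGradientAt.hasFDerivAt).comp_hasDerivAt t hc
      simpa [InnerProductSpace.toDual_apply_apply, Function.comp_def] using this
    have h2 : HasDerivAt (fun t : ℝ => t * ⟪gradient f x, v⟫) (⟪gradient f x, v⟫) t := by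
      simpa using (hasDerivAt_id t).mul_const _
    have h3 : HasDerivAt (fun t : ℝ => L₁ / 2 * t ^ 2 * ‖v‖ ^ 2) (L₁ * t * ‖v‖ ^ 2) t := by
      have := ((hasDerivAt_pow 2 t).const_mul (L₁ / 2)).mul_const (‖v‖ ^ 2)
      refine this.congr_deriv ?_
      rw [show (2:ℕ) - 1 = 1 from rfl]
      ring
    exact (h1.sub h2).sub h3
  have hmono : AntitoneOn ψ (Set.Icc (0:ℝ) 1) := by
    apply antitoneOn_of_deriv_nonpos (convex_Icc 0 1)
    · intro t _
      exact ((hψ t).differentiableAt).continuousAt.continuousWithinAt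
    · intro t _
      exact (hψ t).differentiableAt.differentiableWithinAt
    · intro t ht
      rw [interior_Icc] at ht
      rw [(hψ t).deriv]
      have hinner : ⟪gradient f (x + t • v), v⟫ - ⟪gradient f x, v⟫
          = ⟪gradient f (x + t • v) - gradient f x, v⟫ := (inner_sub_left _ _ _).symm
      have h1 : ⟪gradient f (x + t • v) - gradient f x, v⟫ ≤ L₁ * t * ‖v‖ ^ 2 := by
        calc ⟪gradient f (x + t • v) - gradient f x, v⟫
            ≤ ‖gradient f (x + t • v) - gradient f x‖ * ‖v‖ := real_inner_le_norm _ _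
          _ ≤ (L₁ * ‖(x + t • v) - x‖) * ‖v‖ := by
              apply mul_le_mul_of_nonneg_right (hlip _ _) (norm_nonneg _)
          _ = L₁ * t * ‖v‖ ^ 2 := by
              rw [add_sub_cancel_left, norm_smul, Real.norm_eq_abs, abs_of_pos ht.1]
              ring
      linarith [hinner ▸ h1]
  have h01 := hmono (Set.mem_Icc.mpr ⟨le_refl 0, zero_le_one⟩)
    (Set.mem_Icc.mpr ⟨zero_le_one, le_refl 1⟩) zero_le_one
  have h0 : ψ 0 = f x := by simp [hψdef]
  have h1 : ψ 1 = f (x + v) - ⟪gradient f x, v⟫ - L₁ / 2 * ‖v‖ ^ 2 := by simp [hψdef]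
  rw [h0, h1] at h01
  linarith

open RealInnerProductSpace in
/-- Convergence of gradient descent with a biased gradient oracle: if `f` is differentiable
with `L₁`-Lipschitz gradient and bounded below by `fstar`, the step size satisfies
`0 < η ≤ 1/(4 L₁)`, and the gradient estimates `g k` have bias at most `B`, then the
average squared gradient norm along the iterates is at most
`4 (f θ₀ - fstar) / (η K) + 3 B²`. -/
theorem biased_gradient_descent_convergence
    {E : Type*} [NormedAddCommGroup E] [InnerProductSpace ℝ E] [CompleteSpace E]
    (f : E → ℝ) (hf : Differentiable ℝ f)
    (L₁ : ℝ) (hL₁ : 0 < L₁)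
    (hlip : ∀ x y : E, ‖gradient f x - gradient f y‖ ≤ L₁ * ‖x - y‖)
    (fstar : ℝ) (hbound : ∀ x, fstar ≤ f x)
    (η : ℝ) (hη0 : 0 < η) (hη1 : η ≤ 1 / (4 * L₁))
    (B : ℝ) (hB : 0 ≤ B)
    (θ g : ℕ → E)
    (hstep : ∀ k, θ (k + 1) = θ k - η • g k)
    (hbias : ∀ k, ‖g k - gradient f (θ k)‖ ≤ B)
    (K : ℕ) (hK : 1 ≤ K) :
    (1 / (K : ℝ)) * ∑ k ∈ Finset.range K, ‖gradient f (θ k)‖ ^ 2 ≤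
      4 * (f (θ 0) - fstar) / (η * K) + 3 * B ^ 2 := by
  have hLη : L₁ * η ≤ 1 / 4 := by
    rw [le_div_iff₀ (by positivity)] at hη1
    linarith
  -- per-step descent
  have key : ∀ k, f (θ (k + 1)) ≤ f (θ k) - η / 4 * ‖gradient f (θ k)‖ ^ 2
      + 3 * η / 4 * B ^ 2 := by
    intro k
    set G := gradient f (θ k) with hG
    have hθ : θ (k + 1) = θ k + -(η • g k) := by rw [hstep k]; abel
    have h := descent_aux f hf L₁ hL₁ hlip (θ k) (-(η • g k))
    rw [← hθ] at h
    have he : ‖g k - G‖ ≤ B := hbias k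
    have hip : ⟪G, -(η • g k)⟫ = -(η * (‖G‖ ^ 2 + ⟪G, g k - G⟫)) := by
      have h5 : ⟪G, g k - G⟫ = ⟪G, g k⟫ - ‖G‖ ^ 2 := by
        rw [inner_sub_right, real_inner_self_eq_norm_sq]
      rw [inner_neg_right, real_inner_smul_right, h5]
      ring
    have hnn : ‖-(η • g k)‖ = η * ‖g k‖ := by
      rw [norm_neg, norm_smul, Real.norm_eq_abs, abs_of_pos hη0]
    rw [hip, hnn] at h
    have hipb : |⟪G, g k - G⟫| ≤ ‖G‖ * B :=
      le_trans (abs_real_inner_le_norm _ _) (mul_le_mul_of_nonneg_left he (norm_nonneg _))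
    have hgn : ‖g k‖ ≤ ‖G‖ + B := by
      calc ‖g k‖ = ‖G + (g k - G)‖ := by rw [add_sub_cancel]
        _ ≤ ‖G‖ + ‖g k - G‖ := norm_add_le _ _
        _ ≤ ‖G‖ + B := by linarith
    -- bound the quadratic term
    have hq : L₁ / 2 * (η * ‖g k‖) ^ 2 ≤ η / 4 * (‖G‖ ^ 2 + B ^ 2) := by
      have h1 : ‖g k‖ ^ 2 ≤ 2 * ‖G‖ ^ 2 + 2 * B ^ 2 := by
        nlinarith [norm_nonneg (g k), norm_nonneg G, sq_nonneg (‖G‖ - B)]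
      have h2 : L₁ / 2 * (η * ‖g k‖) ^ 2 = (L₁ * η) * (η / 2 * ‖g k‖ ^ 2) := by ring
      rw [h2]
      calc (L₁ * η) * (η / 2 * ‖g k‖ ^ 2) ≤ 1 / 4 * (η / 2 * ‖g k‖ ^ 2) := by
            apply mul_le_mul_of_nonneg_right hLη; positivity
        _ ≤ 1 / 4 * (η / 2 * (2 * ‖G‖ ^ 2 + 2 * B ^ 2)) := by
            apply mul_le_mul_of_nonneg_left _ (by norm_num)
            apply mul_le_mul_of_nonneg_left h1; positivity
        _ = η / 4 * (‖G‖ ^ 2 + B ^ 2) := by ring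
    have hib : -(η * (‖G‖ ^ 2 + ⟪G, g k - G⟫)) ≤ -(η / 2 * ‖G‖ ^ 2) + η / 2 * B ^ 2 := by
      have h3 : -⟪G, g k - G⟫ ≤ ‖G‖ * B := by
        have := abs_le.mp hipb
        linarith [this.1]
      have h4 : ‖G‖ * B ≤ ‖G‖ ^ 2 / 2 + B ^ 2 / 2 := by nlinarith [sq_nonneg (‖G‖ - B)]
      nlinarith
    linarith
  -- telescoping sum
  have tele : ∀ n : ℕ, f (θ n) + η / 4 * ∑ k ∈ Finset.range n, ‖gradient f (θ k)‖ ^ 2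
      ≤ f (θ 0) + n * (3 * η / 4 * B ^ 2) := by
    intro n
    induction n with
    | zero => simp
    | succ n ih =>
        rw [Finset.sum_range_succ]
        have := key n
        push_cast
        linarith
  have hKpos : (0 : ℝ) < K := by exact_mod_cast Nat.lt_of_lt_of_le Nat.zero_lt_one hK
  set S := ∑ k ∈ Finset.range K, ‖gradient f (θ k)‖ ^ 2 with hSdef
  have hS : η / 4 * S ≤ (f (θ 0) - fstar) + K * (3 * η / 4 * B ^ 2) := by
    have := tele K
    linarith [hbound (θ K)]
  have hS2 : S ≤ 4 * (f (θ 0) - fstar) / η + 3 * K * B ^ 2 := by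
    have hrw : η / 4 * (4 * (f (θ 0) - fstar) / η + 3 * K * B ^ 2)
        = (f (θ 0) - fstar) + K * (3 * η / 4 * B ^ 2) := by
      field_simp
    have := hrw ▸ hS
    exact le_of_mul_le_mul_left (by linarith) (by positivity : (0:ℝ) < η / 4)
  have hrw2 : (4 * (f (θ 0) - fstar) / η + 3 * K * B ^ 2) / K
      = 4 * (f (θ 0) - fstar) / (η * K) + 3 * B ^ 2 := by
    field_simp
  rw [one_div, inv_mul_eq_div, ← hrw2]
  gcongr
end
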